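/- Lower bound via an admissible heuristic: let h : ℝ² × ℝ² → ℝ≥0∞ be admissible. Then for every x₀, x_f ∈ ℝ², every finite sequence of sets [𝒯₀, …, 𝒯_N] with 𝒯ᵢ ⊆ ℝ², and every 1 ≤ M ≤ N: Q(x₀, [𝒯₀, …, 𝒯_N], x_f) ≥ V(x₀, [𝒯₀, …, 𝒯_{M−1}]) + ⨅_{p ∈ 𝒯_{M−1}} h(p, x_f), i.e. the fixed-endpoint value of the full sequence is bounded below by the lower bound Q̲(x₀, [𝒯₀, …, 𝒯_{M−1}], x_f). -/
import Mathlib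


open scoped ENNReal
open MeasureTheory

noncomputable section

/-- The state space `ℝ²` with the Euclidean norm. -/
abbrev E2 : Type := EuclideanSpace ℝ (Fin 2)

/-- `Feasible m f J N T x₀ x u t` says that `(x, u, t)` is a feasible trajectory through the
finite sequence of sets `[T 0, …, T N]` starting at `x₀`: the times are nondecreasing, the
trajectory starts at `x₀`, it satisfies the dynamics `ẋ = f(x, u)` on `[t 0, t (N+1)]`,
stays in `T i` on `[t i, t (i+1)]`, and the running cost is integrable. -/
def Feasible (m : ℕ) (f : E2 × (Fin m → ℝ) → E2) (J : E2 × (Fin m → ℝ) × ℝ → ℝ)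
    (N : ℕ) (T : Fin (N + 1) → Set E2) (x₀ : E2)
    (x : ℝ → E2) (u : ℝ → Fin m → ℝ) (t : Fin (N + 2) → ℝ) : Prop :=
  Monotone t ∧
  x (t 0) = x₀ ∧
  (∀ τ ∈ Set.Icc (t 0) (t (Fin.last (N + 1))), HasDerivAt x (f (x τ, u τ)) τ) ∧
  (∀ i : Fin (N + 1), ∀ τ ∈ Set.Icc (t i.castSucc) (t i.succ), x τ ∈ T i) ∧
  IntervalIntegrable (fun τ => J (x τ, u τ, τ)) volume (t 0) (t (Fin.last (N + 1)))

/-- The cost of a trajectory: `ENNReal.ofReal` of the integral of the running cost. -/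
def cost (m : ℕ) (J : E2 × (Fin m → ℝ) × ℝ → ℝ)
    (N : ℕ) (x : ℝ → E2) (u : ℝ → Fin m → ℝ) (t : Fin (N + 2) → ℝ) : ℝ≥0∞ :=
  ENNReal.ofReal (∫ τ in (t 0)..(t (Fin.last (N + 1))), J (x τ, u τ, τ))

/-- The free-endpoint value function `V(x₀, [T 0, …, T N])`: the infimum (in `ℝ≥0∞`) of the
costs of all feasible trajectories through `[T 0, …, T N]` starting at `x₀`. -/
def V (m : ℕ) (f : E2 × (Fin m → ℝ) → E2) (J : E2 × (Fin m → ℝ) × ℝ → ℝ)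
    (x₀ : E2) (N : ℕ) (T : Fin (N + 1) → Set E2) : ℝ≥0∞ :=
  sInf { c | ∃ x u t, Feasible m f J N T x₀ x u t ∧ c = cost m J N x u t }

/-- The fixed-endpoint value function `Q(x₀, [T 0, …, T N], xf)`: the infimum (in `ℝ≥0∞`) of
the costs of all feasible trajectories through `[T 0, …, T N]` starting at `x₀` and ending
at `xf`. -/
def Q (m : ℕ) (f : E2 × (Fin m → ℝ) → E2) (J : E2 × (Fin m → ℝ) × ℝ → ℝ)
    (x₀ : E2) (N : ℕ) (T : Fin (N + 1) → Set E2) (xf : E2) : ℝ≥0∞ :=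
  sInf { c | ∃ x u t, Feasible m f J N T x₀ x u t ∧ x (t (Fin.last (N + 1))) = xf ∧
    c = cost m J N x u t }

/-- A heuristic `h : ℝ² × ℝ² → ℝ≥0∞` is admissible if it underestimates the fixed-endpoint
value function for every pair of states and every finite sequence of sets. -/
def Admissible (m : ℕ) (f : E2 × (Fin m → ℝ) → E2) (J : E2 × (Fin m → ℝ) × ℝ → ℝ)
    (h : E2 → E2 → ℝ≥0∞) : Prop :=
  ∀ (p xf : E2) (K : ℕ) (S : Fin (K + 1) → Set E2), h p xf ≤ Q m f J p K S xf

/-- The lower bound `Q̲(x₀, [S 0, …, S M], xf) = V(x₀, [S 0, …, S M]) + ⨅_{p ∈ S M} h(p, xf)`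
on the cost of completing the (possibly incomplete) sequence `[S 0, …, S M]`. -/
def Qlow (m : ℕ) (f : E2 × (Fin m → ℝ) → E2) (J : E2 × (Fin m → ℝ) × ℝ → ℝ)
    (h : E2 → E2 → ℝ≥0∞) (x₀ : E2) (M : ℕ) (S : Fin (M + 1) → Set E2) (xf : E2) : ℝ≥0∞ :=
  V m f J x₀ M S + ⨅ p ∈ S (Fin.last M), h p xf

/-- **Lemma 3.** For an admissible heuristic `h` and `1 ≤ M ≤ N`, the fixed-endpoint value of
the full sequence `[T 0, …, T N]` is bounded below by
`Q̲(x₀, [T 0, …, T (M-1)], xf) = V(x₀, [T 0, …, T (M-1)]) + ⨅_{p ∈ T (M-1)} h(p, xf)`. -/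
theorem fixed_endpoint_value_ge_Qlow
    (m : ℕ) (f : E2 × (Fin m → ℝ) → E2) (J : E2 × (Fin m → ℝ) × ℝ → ℝ)
    (hJ : ∀ x u t, 0 ≤ J (x, u, t))
    (h : E2 → E2 → ℝ≥0∞) (hadm : Admissible m f J h)
    (x₀ xf : E2) (N : ℕ) (T : Fin (N + 1) → Set E2)
    (M : ℕ) (hM1 : 1 ≤ M) (hMN : M ≤ N) :
    Qlow m f J h x₀ (M - 1) (fun i => T (Fin.castLE (by omega) i)) xf
      ≤ Q m f J x₀ N T xf := by
  obtain ⟨M', rfl⟩ : ∃ M', M = M' + 1 := ⟨M - 1, by omega⟩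
  apply le_sInf
  rintro c ⟨x, u, t, ⟨htmono, hx0, hderiv, hmem, hint⟩, hend, rfl⟩
  -- prefix times
  set t₁ : Fin (M' + 2) → ℝ := fun i => t ⟨i, by have := i.isLt; omega⟩ with ht₁
  have h0 : t₁ 0 = t 0 := congrArg t (Fin.ext (by simp))
  have hMlt : M' + 1 < N + 2 := by omega
  have hlast1 : t₁ (Fin.last (M' + 1)) = t ⟨M' + 1, hMlt⟩ := rfl
  have hab : t 0 ≤ t ⟨M' + 1, hMlt⟩ := htmono (by simp [Fin.le_def])
  have hbc : t ⟨M' + 1, hMlt⟩ ≤ t (Fin.last (N + 1)) := htmono (by simp [Fin.le_def]; omega)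
  have hac : t 0 ≤ t (Fin.last (N + 1)) := hab.trans hbc
  -- integrability on subintervals
  have hint1 : IntervalIntegrable (fun τ => J (x τ, u τ, τ)) volume (t 0) (t ⟨M' + 1, hMlt⟩) := by
    refine hint.mono_set ?_
    rw [Set.uIcc_of_le hab, Set.uIcc_of_le hac]
    exact Set.Icc_subset_Icc le_rfl hbc
  have hint2 : IntervalIntegrable (fun τ => J (x τ, u τ, τ)) volume (t ⟨M' + 1, hMlt⟩)
      (t (Fin.last (N + 1))) := by
    refine hint.mono_set ?_
    rw [Set.uIcc_of_le hbc, Set.uIcc_of_le hac]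
    exact Set.Icc_subset_Icc hab le_rfl
  -- prefix feasibility
  have feas₁ : Feasible m f J M' (fun i => T (Fin.castLE (by omega) i)) x₀ x u t₁ := by
    refine ⟨?_, ?_, ?_, ?_, ?_⟩
    · intro i j hij
      exact htmono (Fin.mk_le_mk.mpr (Fin.le_def.mp hij))
    · rw [h0]; exact hx0
    · intro τ hτ
      refine hderiv τ ⟨?_, ?_⟩
      · rw [h0] at hτ; exact hτ.1
      · exact hτ.2.trans hbc
    · intro i τ hτ
      exact hmem ⟨i, by have := i.isLt; omega⟩ τ hτ
    · rw [h0, hlast1]; exact hint1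
  -- suffix
  set K : ℕ := N - (M' + 1) with hK
  set t₂ : Fin (K + 2) → ℝ := fun j => t ⟨M' + 1 + j, by have := j.isLt; omega⟩ with ht₂
  set T₂ : Fin (K + 1) → Set E2 := fun j => T ⟨M' + 1 + j, by have := j.isLt; omega⟩ with hT₂
  have h20 : t₂ 0 = t ⟨M' + 1, hMlt⟩ := congrArg t (Fin.ext (by simp))
  have h2last : t₂ (Fin.last (K + 1)) = t (Fin.last (N + 1)) :=
    congrArg t (Fin.ext (by simp; omega))
  have feas₂ : Feasible m f J K T₂ (x (t₂ 0)) x u t₂ := by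
    refine ⟨?_, rfl, ?_, ?_, ?_⟩
    · intro i j hij
      exact htmono (Fin.mk_le_mk.mpr (by have := Fin.le_def.mp hij; omega))
    · intro τ hτ
      refine hderiv τ ⟨?_, ?_⟩
      · rw [h20] at hτ; exact hab.trans hτ.1
      · rw [h2last] at hτ; exact hτ.2
    · intro i τ hτ
      exact hmem ⟨M' + 1 + i, by have := i.isLt; omega⟩ τ hτ
    · rw [h20, h2last]; exact hint2
  -- x(t₂ last) = xf
  have hend₂ : x (t₂ (Fin.last (K + 1))) = xf := by rw [h2last]; exact hend
  -- split the cost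
  have hsplit : (∫ τ in (t 0)..(t (Fin.last (N + 1))), J (x τ, u τ, τ)) =
      (∫ τ in (t 0)..(t ⟨M' + 1, hMlt⟩), J (x τ, u τ, τ)) +
      (∫ τ in (t ⟨M' + 1, hMlt⟩)..(t (Fin.last (N + 1))), J (x τ, u τ, τ)) :=
    (intervalIntegral.integral_add_adjacent_intervals hint1 hint2).symm
  have hnn1 : 0 ≤ ∫ τ in (t 0)..(t ⟨M' + 1, hMlt⟩), J (x τ, u τ, τ) :=
    intervalIntegral.integral_nonneg hab (fun τ _ => hJ (x τ) (u τ) τ)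
  have hnn2 : 0 ≤ ∫ τ in (t ⟨M' + 1, hMlt⟩)..(t (Fin.last (N + 1))), J (x τ, u τ, τ) :=
    intervalIntegral.integral_nonneg hbc (fun τ _ => hJ (x τ) (u τ) τ)
  have hcost : cost m J N x u t =
      ENNReal.ofReal (∫ τ in (t 0)..(t ⟨M' + 1, hMlt⟩), J (x τ, u τ, τ)) +
      ENNReal.ofReal (∫ τ in (t ⟨M' + 1, hMlt⟩)..(t (Fin.last (N + 1))), J (x τ, u τ, τ)) := by
    rw [cost, hsplit, ENNReal.ofReal_add hnn1 hnn2]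
  -- V bound
  have hV : V m f J x₀ M' (fun i => T (Fin.castLE (by omega) i)) ≤
      ENNReal.ofReal (∫ τ in (t 0)..(t ⟨M' + 1, hMlt⟩), J (x τ, u τ, τ)) := by
    refine sInf_le ⟨x, u, t₁, feas₁, ?_⟩
    rw [cost, h0, hlast1]
  -- heuristic bound
  have hxmem : x (t ⟨M' + 1, hMlt⟩) ∈ T ⟨M', by omega⟩ := by
    refine hmem ⟨M', by omega⟩ (t ⟨M' + 1, hMlt⟩) ⟨htmono ?_, le_rfl⟩
    simp [Fin.le_def]
  have hQ2 : Q m f J (x (t ⟨M' + 1, hMlt⟩)) K T₂ xf ≤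
      ENNReal.ofReal (∫ τ in (t ⟨M' + 1, hMlt⟩)..(t (Fin.last (N + 1))), J (x τ, u τ, τ)) := by
    refine sInf_le ⟨x, u, t₂, ?_, hend₂, ?_⟩
    · rw [← h20] at *; exact feas₂
    · rw [cost, h20, h2last]
  have hh : (⨅ p ∈ (fun i : Fin (M' + 1) =>
        T (Fin.castLE (by omega : M' + 1 ≤ N + 1) i)) (Fin.last M'), h p xf) ≤
      ENNReal.ofReal (∫ τ in (t ⟨M' + 1, hMlt⟩)..(t (Fin.last (N + 1))), J (x τ, u τ, τ)) := by
    refine le_trans (iInf₂_le (x (t ⟨M' + 1, hMlt⟩)) hxmem) ?_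
    exact le_trans (hadm _ xf K T₂) hQ2
  rw [hcost, Qlow]
  exact add_le_add hV hh
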